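/- Let x : ℕ × ℤ⁴ → ℝ be a family of real numbers such that x(ℓ,m) = 0 whenever m ∉ N(ℓ), x(0,m) = x(1,m) = 0 for all m, and Σ_{ℓ,m} (ℓ+2)²·x(ℓ,m)² < ∞. Then Σ_{ℓ≥2} Σ_{m∈N(ℓ)} [ α(ℓ,m₁)·x(ℓ,m)² + β(ℓ,m₁)·x(ℓ,m)·x(ℓ+1,m) ] ≥ (18/85) · Σ_{ℓ≥2} Σ_{m∈N(ℓ)} [ (ℓ+2)²·x(ℓ,m)² + 2·C₅(ℓ,m₁)·(ℓ+2)·(ℓ+3)·x(ℓ,m)·x(ℓ+1,m) ], where both series converge absolutely. (This is the spectral-gap inequality expressing, in spherical-harmonic coefficients after the Penrose transform, the coercivity Q((f₀,0),(f₀,0)) ≥ (36/85)(1/(8π))‖(f₀,0)‖² for data orthogonal to the tangent space of the manifold of maximisers.) -/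

import Mathlib

/-- `m = (m₁, m₂, m₃, m₄) ∈ ℤ⁴` belongs to `N(ℓ)` iff `ℓ ≥ m₁ ≥ m₂ ≥ m₃ ≥ |m₄|`. -/
def inN (ℓ : ℕ) (m : ℤ × ℤ × ℤ × ℤ) : Prop :=
  m.1 ≤ (ℓ : ℤ) ∧ m.2.1 ≤ m.1 ∧ m.2.2.1 ≤ m.2.1 ∧ |m.2.2.2| ≤ m.2.2.1

instance (ℓ : ℕ) (m : ℤ × ℤ × ℤ × ℤ) : Decidable (inN ℓ m) := by
  unfold inN; infer_instance

/-- The coefficient `C₅(ℓ, m₁)`. -/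
noncomputable def C₅ (ℓ : ℕ) (m₁ : ℤ) : ℝ :=
  if 0 ≤ m₁ ∧ m₁ ≤ (ℓ : ℤ) then
    (1 / 2) * Real.sqrt ((((ℓ : ℝ) - (m₁ : ℝ) + 1) * ((ℓ : ℝ) + (m₁ : ℝ) + 4)) /
      (((ℓ : ℝ) + 2) * ((ℓ : ℝ) + 3)))
  else 0

/-- The coefficient `α(ℓ, m₁)`. -/
noncomputable def αc (ℓ : ℕ) (m₁ : ℤ) : ℝ :=
  ((ℓ : ℝ) ^ 4 + 8 * (ℓ : ℝ) ^ 3 + 11 * (ℓ : ℝ) ^ 2 - 20 * (ℓ : ℝ) - 12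
      + 6 * (m₁ : ℝ) ^ 2 + 18 * (m₁ : ℝ)) / (((ℓ : ℝ) + 1) * ((ℓ : ℝ) + 3))

/-- The coefficient `β(ℓ, m₁)`. -/
noncomputable def βc (ℓ : ℕ) (m₁ : ℤ) : ℝ :=
  ((ℓ : ℝ) - 1) * ((ℓ : ℝ) + 6) *
    Real.sqrt ((((ℓ : ℝ) + 1 - (m₁ : ℝ)) * ((ℓ : ℝ) + 4 + (m₁ : ℝ))) /
      (((ℓ : ℝ) + 2) * ((ℓ : ℝ) + 3)))


/-!
After subtracting `18/85` times the norm form, the cross term of the quadratic form at level `ℓ`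
has coefficient `crossGap ℓ * C₅ ℓ m₁ ≥ 0` (since `β = 2(ℓ-1)(ℓ+6) C₅`). A weighted AM-GM
inequality splits it between the diagonal entries at levels `ℓ` and `ℓ + 1`, bounding the
difference of the two forms below by `Σ lowerDiag x(ℓ)² - Σ lowerShift x(ℓ+1)²`. This is
nonnegative because `lowerShift ℓ ≤ lowerDiag (ℓ + 1)`: for `ℓ ≥ 3` this follows from `C₅ ≤ 1/2`
and the identity `diagGap (ℓ+1) 0 - (crossGap ℓ + crossGap (ℓ+1)) / 4 = 12 / ((ℓ+2)(ℓ+4))`;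
the links `0 ≤ lowerDiag 2` and `lowerShift 2 ≤ lowerDiag 3` are checked numerically, with the
AM-GM weight lowered to `3/8` at `ℓ = 2`.
-/

open Function

theorem tsum_nonneg_of_sub_le_of_le_shift {ι : Type*} {D E F : ℕ × ι → ℝ}
    (hD : Summable D) (hE : Summable E) (hE₀ : ∀ p, 0 ≤ E p)
    (hEFD : ∀ p, E p - F p ≤ D p) (hFE : ∀ n i, F (n, i) ≤ E (n + 1, i)) :
    0 ≤ ∑' p, D p := by
  have hshift : Injective (Prod.map Nat.succ (id : ι → ι)) :=
    Nat.succ_injective.prodMap injective_id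
  have hF : Summable F := by
    have hdiff : Summable fun p => F p - (E p - D p) :=
      .of_nonneg_of_le (fun p => by linarith [hEFD p])
        (fun p => show _ ≤ E (p.1 + 1, p.2) - E p + D p by linarith [hFE p.1 p.2])
        (((hE.comp_injective hshift).sub hE).add hD)
    simpa using hdiff.add (hE.sub hD)
  calc 0 ≤ ∑' p, E p - ∑' p, F p :=
        sub_nonneg.2 <| hF.tsum_le_tsum_of_inj _ hshift (fun c _ => hE₀ c)
          (fun p => hFE p.1 p.2) hE
    _ = ∑' p, (E p - F p) := (hE.tsum_sub hF).symm
    _ ≤ ∑' p, D p := (hE.sub hF).tsum_le_tsum hEFD hD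

theorem abs_mul_sq_add_mul_mul_le {a b c d x y : ℝ} (ha : |a| ≤ 2 * c ^ 2) (hb : |b| ≤ c * d) :
    |a * x ^ 2 + b * x * y| ≤ 3 * c ^ 2 * x ^ 2 + d ^ 2 * y ^ 2 := by
  have hbxy : |b * x * y| ≤ c * d * (|x| * |y|) := by
    rw [abs_mul, abs_mul, mul_assoc]
    exact mul_le_mul_of_nonneg_right hb (by positivity)
  have hax : |a * x ^ 2| ≤ 2 * c ^ 2 * x ^ 2 := by
    rw [abs_mul, abs_sq]
    exact mul_le_mul_of_nonneg_right ha (sq_nonneg x)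
  have hamgm : c * d * (|x| * |y|) ≤ c ^ 2 * x ^ 2 + d ^ 2 * y ^ 2 := by
    nlinarith [sq_nonneg (c * |x| - d * |y|), sq_abs x, sq_abs y]
  linarith [abs_add_le (a * x ^ 2) (b * x * y)]

theorem sub_mul_sq_sub_le_add_mul_mul {a c t x y : ℝ} (hc : 0 ≤ c) (ht : 0 < t) :
    (a - c * t) * x ^ 2 - c / (4 * t) * y ^ 2 ≤ a * x ^ 2 + c * x * y := by
  have hsq : 0 ≤ c / (4 * t) * (2 * t * x + y) ^ 2 := by positivity
  have hid : a * x ^ 2 + c * x * y - ((a - c * t) * x ^ 2 - c / (4 * t) * y ^ 2)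
      = c / (4 * t) * (2 * t * x + y) ^ 2 := by
    field_simp
    ring
  linarith

theorem summable_abs_tridiagonal {ι : Type*} (x a b : ℕ → ι → ℝ)
    (hsum : Summable fun p : ℕ × ι => ((p.1 : ℝ) + 2) ^ 2 * x p.1 p.2 ^ 2)
    (ha : ∀ ℓ i, x ℓ i ≠ 0 → |a ℓ i| ≤ 2 * ((ℓ : ℝ) + 2) ^ 2)
    (hb : ∀ ℓ i, x ℓ i ≠ 0 → |b ℓ i| ≤ ((ℓ : ℝ) + 2) * ((ℓ : ℝ) + 3)) :
    Summable fun p : ℕ × ι =>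
      |a p.1 p.2 * x p.1 p.2 ^ 2 + b p.1 p.2 * x p.1 p.2 * x (p.1 + 1) p.2| := by
  have hshift : Summable fun p : ℕ × ι => ((p.1 : ℝ) + 3) ^ 2 * x (p.1 + 1) p.2 ^ 2 := by
    refine (hsum.comp_injective (Nat.succ_injective.prodMap injective_id)).congr fun p => ?_
    simp only [comp_apply, Prod.map_fst, Prod.map_snd, id_eq, Nat.succ_eq_add_one]
    push_cast
    ring
  refine .of_nonneg_of_le (fun _ => abs_nonneg _) (fun ⟨ℓ, i⟩ => ?_) ((hsum.mul_left 3).add hshift)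
  by_cases hx : x ℓ i = 0
  · simp only [hx, ne_eq, OfNat.ofNat_ne_zero, not_false_eq_true, zero_pow, mul_zero, zero_mul,
      add_zero, abs_zero]
    positivity
  · simpa only [mul_assoc] using abs_mul_sq_add_mul_mul_le (ha ℓ i hx) (hb ℓ i hx)

theorem C₅_nonneg (ℓ : ℕ) (m₁ : ℤ) : 0 ≤ C₅ ℓ m₁ := by
  unfold C₅
  split_ifs <;> positivity

theorem C₅_zero (ℓ : ℕ) :
    C₅ ℓ 0 = 1 / 2 * Real.sqrt (((ℓ : ℝ) + 1) * ((ℓ : ℝ) + 4) / (((ℓ : ℝ) + 2) * ((ℓ : ℝ) + 3))) := by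
  rw [C₅, if_pos ⟨le_rfl, Int.natCast_nonneg ℓ⟩]
  push_cast
  ring_nf

theorem C₅_le_C₅_zero (ℓ : ℕ) (m₁ : ℤ) : C₅ ℓ m₁ ≤ C₅ ℓ 0 := by
  rw [C₅_zero, C₅]
  split_ifs with hm
  · have hm₀ : (0 : ℝ) ≤ m₁ := by exact_mod_cast hm.1
    gcongr _ * Real.sqrt (?_ / _)
    nlinarith
  · positivity

theorem C₅_le_half (ℓ : ℕ) (m₁ : ℤ) : C₅ ℓ m₁ ≤ 1 / 2 := by
  refine (C₅_le_C₅_zero ℓ m₁).trans ?_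
  have hsqrt : Real.sqrt (((ℓ : ℝ) + 1) * ((ℓ : ℝ) + 4) / (((ℓ : ℝ) + 2) * ((ℓ : ℝ) + 3))) ≤ 1 := by
    rw [Real.sqrt_le_one, div_le_one (by positivity)]
    nlinarith
  rw [C₅_zero]
  linarith

theorem C₅_two_zero_le : C₅ 2 0 ≤ 19 / 40 := by
  have : Real.sqrt (((2 : ℕ) + 1) * ((2 : ℕ) + 4) / (((2 : ℕ) + 2) * ((2 : ℕ) + 3))) ≤ 19 / 20 :=
    Real.sqrt_le_iff.2 ⟨by norm_num, by norm_num⟩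
  rw [C₅_zero]
  linarith

theorem C₅_three_zero_le : C₅ 3 0 ≤ 97 / 200 := by
  have : Real.sqrt (((3 : ℕ) + 1) * ((3 : ℕ) + 4) / (((3 : ℕ) + 2) * ((3 : ℕ) + 3))) ≤ 97 / 100 :=
    Real.sqrt_le_iff.2 ⟨by norm_num, by norm_num⟩
  rw [C₅_zero]
  linarith

theorem βc_eq {ℓ : ℕ} {m₁ : ℤ} (hm₀ : 0 ≤ m₁) (hm : m₁ ≤ ℓ) :
    βc ℓ m₁ = 2 * ((ℓ : ℝ) - 1) * ((ℓ : ℝ) + 6) * C₅ ℓ m₁ := by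
  rw [βc, C₅, if_pos ⟨hm₀, hm⟩]
  ring_nf

theorem abs_αc_le {ℓ : ℕ} {m₁ : ℤ} (hm₀ : 0 ≤ m₁) (hm : m₁ ≤ ℓ) :
    |αc ℓ m₁| ≤ 2 * ((ℓ : ℝ) + 2) ^ 2 := by
  have hm₀' : (0 : ℝ) ≤ m₁ := by exact_mod_cast hm₀
  have hm' : (m₁ : ℝ) ≤ ℓ := by exact_mod_cast hm
  have hℓ : (0 : ℝ) ≤ ℓ := Nat.cast_nonneg ℓ
  rw [αc, abs_div, abs_of_pos (show (0 : ℝ) < ((ℓ : ℝ) + 1) * ((ℓ : ℝ) + 3) by positivity), div_le_iff₀ (by positivity), abs_le]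
  constructor <;> nlinarith [mul_nonneg hm₀' (sub_nonneg.2 hm')]

theorem abs_βc_le {ℓ : ℕ} {m₁ : ℤ} (hm₀ : 0 ≤ m₁) (hm : m₁ ≤ ℓ) :
    |βc ℓ m₁| ≤ ((ℓ : ℝ) + 2) * ((ℓ : ℝ) + 3) := by
  have hℓ : (0 : ℝ) ≤ ℓ := Nat.cast_nonneg ℓ
  have hC₀ := C₅_nonneg ℓ m₁
  have hC := C₅_le_half ℓ m₁
  rw [βc_eq hm₀ hm, abs_le]
  have hC' : 0 ≤ 1 / 2 - C₅ ℓ m₁ := sub_nonneg.2 hC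
  constructor
  · nlinarith [mul_nonneg (sq_nonneg (ℓ : ℝ)) hC₀, mul_nonneg hℓ hC₀]
  · nlinarith [mul_nonneg (sq_nonneg (ℓ : ℝ)) hC', mul_nonneg hℓ hC']

theorem abs_two_mul_C₅_mul_le (ℓ : ℕ) (m₁ : ℤ) :
    |2 * C₅ ℓ m₁ * ((ℓ : ℝ) + 2) * ((ℓ : ℝ) + 3)| ≤ ((ℓ : ℝ) + 2) * ((ℓ : ℝ) + 3) := by
  have hC := C₅_le_half ℓ m₁
  rw [abs_of_nonneg (by have := C₅_nonneg ℓ m₁; positivity)]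
  nlinarith [show (0 : ℝ) ≤ ((ℓ : ℝ) + 2) * ((ℓ : ℝ) + 3) by positivity]

noncomputable def diagGap (ℓ : ℕ) (m₁ : ℤ) : ℝ := αc ℓ m₁ - 18 / 85 * ((ℓ : ℝ) + 2) ^ 2

noncomputable def crossGap (ℓ : ℕ) : ℝ :=
  2 * ((ℓ : ℝ) - 1) * ((ℓ : ℝ) + 6) - 36 / 85 * ((ℓ : ℝ) + 2) * ((ℓ : ℝ) + 3)

noncomputable def amgmWeight (ℓ : ℕ) : ℝ := if ℓ = 2 then 3 / 8 else 1 / 2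

noncomputable def lowerDiag (ℓ : ℕ) (m₁ : ℤ) : ℝ :=
  diagGap ℓ m₁ - crossGap ℓ * C₅ ℓ m₁ * amgmWeight ℓ

noncomputable def lowerShift (ℓ : ℕ) (m₁ : ℤ) : ℝ :=
  if 2 ≤ ℓ then crossGap ℓ * C₅ ℓ m₁ / (4 * amgmWeight ℓ) else 0

theorem amgmWeight_pos (ℓ : ℕ) : 0 < amgmWeight ℓ := by
  unfold amgmWeight
  split_ifs <;> norm_num

theorem crossGap_nonneg {ℓ : ℕ} (hℓ : 2 ≤ ℓ) : 0 ≤ crossGap ℓ := by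
  have : (2 : ℝ) ≤ ℓ := by exact_mod_cast hℓ
  unfold crossGap
  nlinarith

theorem diagGap_zero_le {ℓ : ℕ} {m₁ : ℤ} (hm₀ : 0 ≤ m₁) : diagGap ℓ 0 ≤ diagGap ℓ m₁ := by
  have : (0 : ℝ) ≤ m₁ := by exact_mod_cast hm₀
  unfold diagGap αc
  gcongr

theorem crossGap_add_crossGap_succ_le_diagGap_succ (ℓ : ℕ) :
    crossGap ℓ / 4 + crossGap (ℓ + 1) / 4 ≤ diagGap (ℓ + 1) 0 := by
  have hgap : diagGap (ℓ + 1) 0 - (crossGap ℓ / 4 + crossGap (ℓ + 1) / 4)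
      = 12 / (((ℓ : ℝ) + 2) * ((ℓ : ℝ) + 4)) := by
    unfold diagGap αc crossGap
    push_cast
    field_simp
    ring
  have : 0 ≤ 12 / (((ℓ : ℝ) + 2) * ((ℓ : ℝ) + 4)) := by positivity
  linarith

theorem lowerShift_nonneg (ℓ : ℕ) (m₁ : ℤ) : 0 ≤ lowerShift ℓ m₁ := by
  unfold lowerShift
  split_ifs with hℓ
  · have := crossGap_nonneg hℓ
    have := C₅_nonneg ℓ m₁
    have := amgmWeight_pos ℓ
    positivity
  · rfl

theorem lowerDiag_two_nonneg {m₁ : ℤ} (hm₀ : 0 ≤ m₁) : 0 ≤ lowerDiag 2 m₁ := by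
  have hdiag := diagGap_zero_le (ℓ := 2) hm₀
  have hC := (C₅_le_C₅_zero 2 m₁).trans C₅_two_zero_le
  have hG : crossGap 2 = 128 / 17 := by norm_num [crossGap]
  have hD : diagGap 2 0 = 24 / 17 := by norm_num [diagGap, αc]
  rw [lowerDiag, amgmWeight, if_pos rfl, hG]
  linarith

theorem lowerShift_two_le_lowerDiag_three {m₁ : ℤ} (hm₀ : 0 ≤ m₁) :
    lowerShift 2 m₁ ≤ lowerDiag 3 m₁ := by
  have hdiag := diagGap_zero_le (ℓ := 3) hm₀
  have hC₂ := (C₅_le_C₅_zero 2 m₁).trans C₅_two_zero_le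
  have hC₃ := (C₅_le_C₅_zero 3 m₁).trans C₅_three_zero_le
  have hG₂ : crossGap 2 = 128 / 17 := by norm_num [crossGap]
  have hG₃ : crossGap 3 = 396 / 17 := by norm_num [crossGap]
  have hD : diagGap 3 0 = 279 / 34 := by norm_num [diagGap, αc]
  rw [lowerShift, lowerDiag, amgmWeight, amgmWeight, if_pos le_rfl, if_pos rfl, if_neg (by norm_num),
    hG₂, hG₃]
  linarith [show 128 / 17 * C₅ 2 m₁ / (4 * (3 / 8)) = 256 / 51 * C₅ 2 m₁ by ring]

theorem lowerShift_le_lowerDiag_succ_of_three_le {ℓ : ℕ} (hℓ : 3 ≤ ℓ) {m₁ : ℤ} (hm₀ : 0 ≤ m₁) :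
    lowerShift ℓ m₁ ≤ lowerDiag (ℓ + 1) m₁ := by
  have hG := crossGap_nonneg (ℓ := ℓ) (by omega)
  have hG' := crossGap_nonneg (ℓ := ℓ + 1) (by omega)
  have hC := sub_nonneg.2 (C₅_le_half ℓ m₁)
  have hC' := C₅_le_half (ℓ + 1) m₁
  have hdiag := diagGap_zero_le (ℓ := ℓ + 1) hm₀
  have hgap := crossGap_add_crossGap_succ_le_diagGap_succ ℓ
  rw [lowerShift, lowerDiag, amgmWeight, amgmWeight, if_pos (by omega), if_neg (by omega),
    if_neg (by omega)]
  nlinarith [mul_nonneg hG hC, mul_le_mul_of_nonneg_left hC' hG']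

theorem lowerShift_le_lowerDiag_succ {ℓ : ℕ} (hℓ : 1 ≤ ℓ) {m₁ : ℤ} (hm₀ : 0 ≤ m₁) :
    lowerShift ℓ m₁ ≤ lowerDiag (ℓ + 1) m₁ := by
  obtain h | h | h : ℓ = 1 ∨ ℓ = 2 ∨ 3 ≤ ℓ := by omega
  · subst h
    rw [lowerShift, if_neg (by norm_num)]
    exact lowerDiag_two_nonneg hm₀
  · subst h
    exact lowerShift_two_le_lowerDiag_three hm₀
  · exact lowerShift_le_lowerDiag_succ_of_three_le h hm₀

theorem lowerDiag_nonneg {ℓ : ℕ} (hℓ : 2 ≤ ℓ) {m₁ : ℤ} (hm₀ : 0 ≤ m₁) : 0 ≤ lowerDiag ℓ m₁ := by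
  obtain ⟨k, rfl⟩ : ∃ k, ℓ = k + 1 := ⟨ℓ - 1, by omega⟩
  exact (lowerShift_nonneg k m₁).trans (lowerShift_le_lowerDiag_succ (by omega) hm₀)

theorem lowerDiag_le {ℓ : ℕ} (hℓ : 2 ≤ ℓ) {m₁ : ℤ} (hm₀ : 0 ≤ m₁) (hm : m₁ ≤ ℓ) :
    lowerDiag ℓ m₁ ≤ 2 * ((ℓ : ℝ) + 2) ^ 2 := by
  have hα := (le_abs_self _).trans (abs_αc_le hm₀ hm)
  have hcross : 0 ≤ crossGap ℓ * C₅ ℓ m₁ * amgmWeight ℓ :=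
    mul_nonneg (mul_nonneg (crossGap_nonneg hℓ) (C₅_nonneg ℓ m₁)) (amgmWeight_pos ℓ).le
  rw [lowerDiag, diagGap]
  nlinarith

theorem lowerDiag_mul_sq_sub_lowerShift_mul_sq_le {ℓ : ℕ} (hℓ : 2 ≤ ℓ) {m₁ : ℤ} (hm₀ : 0 ≤ m₁) (hm : m₁ ≤ ℓ)
    (x y : ℝ) :
    lowerDiag ℓ m₁ * x ^ 2 - lowerShift ℓ m₁ * y ^ 2
      ≤ (αc ℓ m₁ * x ^ 2 + βc ℓ m₁ * x * y)
        - 18 / 85 * (((ℓ : ℝ) + 2) ^ 2 * x ^ 2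
          + 2 * C₅ ℓ m₁ * ((ℓ : ℝ) + 2) * ((ℓ : ℝ) + 3) * x * y) := by
  have hsplit : (αc ℓ m₁ * x ^ 2 + βc ℓ m₁ * x * y)
        - 18 / 85 * (((ℓ : ℝ) + 2) ^ 2 * x ^ 2
          + 2 * C₅ ℓ m₁ * ((ℓ : ℝ) + 2) * ((ℓ : ℝ) + 3) * x * y)
      = diagGap ℓ m₁ * x ^ 2 + crossGap ℓ * C₅ ℓ m₁ * x * y := by
    rw [βc_eq hm₀ hm, diagGap, crossGap]
    ring
  rw [hsplit, lowerDiag, lowerShift, if_pos hℓ]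
  exact sub_mul_sq_sub_le_add_mul_mul (mul_nonneg (crossGap_nonneg hℓ) (C₅_nonneg ℓ m₁))
    (amgmWeight_pos ℓ)

def HasAdmissibleSupport (x : ℕ → ℤ × ℤ × ℤ × ℤ → ℝ) : Prop :=
  ∀ ℓ m, x ℓ m ≠ 0 → 2 ≤ ℓ ∧ 0 ≤ m.1 ∧ m.1 ≤ (ℓ : ℤ)

theorem hasAdmissibleSupport_of_inN {x : ℕ → ℤ × ℤ × ℤ × ℤ → ℝ}
    (hxN : ∀ ℓ m, ¬ inN ℓ m → x ℓ m = 0) (hx0 : ∀ m, x 0 m = 0) (hx1 : ∀ m, x 1 m = 0) :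
    HasAdmissibleSupport x := by
  intro ℓ m hx
  obtain ⟨hm, h₁₂, h₂₃, h₃₄⟩ : inN ℓ m := by_contra fun h => hx (hxN ℓ m h)
  refine ⟨?_, by linarith [abs_nonneg m.2.2.2], hm⟩
  rcases ℓ with _ | _ | ℓ
  · exact absurd (hx0 m) hx
  · exact absurd (hx1 m) hx
  · omega

section AdmissibleSupport

variable {x : ℕ → ℤ × ℤ × ℤ × ℤ → ℝ}

theorem HasAdmissibleSupport.lowerDiag_mul_sq_nonneg (hx : HasAdmissibleSupport x) (ℓ : ℕ)
    (m : ℤ × ℤ × ℤ × ℤ) : 0 ≤ lowerDiag ℓ m.1 * x ℓ m ^ 2 := by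
  by_cases h : x ℓ m = 0
  · simp [h]
  · obtain ⟨hℓ, hm₀, -⟩ := hx ℓ m h
    exact mul_nonneg (lowerDiag_nonneg hℓ hm₀) (sq_nonneg _)

theorem HasAdmissibleSupport.summable_lowerDiag_mul_sq (hx : HasAdmissibleSupport x)
    (hsum : Summable fun p : ℕ × (ℤ × ℤ × ℤ × ℤ) => ((p.1 : ℝ) + 2) ^ 2 * x p.1 p.2 ^ 2) :
    Summable fun p : ℕ × (ℤ × ℤ × ℤ × ℤ) => lowerDiag p.1 p.2.1 * x p.1 p.2 ^ 2 := by
  refine .of_nonneg_of_le (fun p => hx.lowerDiag_mul_sq_nonneg p.1 p.2) (fun ⟨ℓ, m⟩ => ?_)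
    (hsum.mul_left 2)
  by_cases h : x ℓ m = 0
  · simp [h]
  · obtain ⟨hℓ, hm₀, hm⟩ := hx ℓ m h
    rw [← mul_assoc]
    exact mul_le_mul_of_nonneg_right (lowerDiag_le hℓ hm₀ hm) (sq_nonneg _)

theorem HasAdmissibleSupport.lowerDiag_sub_lowerShift_le (hx : HasAdmissibleSupport x) (ℓ : ℕ)
    (m : ℤ × ℤ × ℤ × ℤ) :
    lowerDiag ℓ m.1 * x ℓ m ^ 2 - lowerShift ℓ m.1 * x (ℓ + 1) m ^ 2
      ≤ (αc ℓ m.1 * x ℓ m ^ 2 + βc ℓ m.1 * x ℓ m * x (ℓ + 1) m)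
        - 18 / 85 * (((ℓ : ℝ) + 2) ^ 2 * x ℓ m ^ 2
          + 2 * C₅ ℓ m.1 * ((ℓ : ℝ) + 2) * ((ℓ : ℝ) + 3) * x ℓ m * x (ℓ + 1) m) := by
  by_cases h : x ℓ m = 0
  · simpa [h] using mul_nonneg (lowerShift_nonneg ℓ m.1) (sq_nonneg (x (ℓ + 1) m))
  · obtain ⟨hℓ, hm₀, hm⟩ := hx ℓ m h
    exact lowerDiag_mul_sq_sub_lowerShift_mul_sq_le hℓ hm₀ hm _ _

theorem HasAdmissibleSupport.lowerShift_mul_sq_le (hx : HasAdmissibleSupport x) (ℓ : ℕ)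
    (m : ℤ × ℤ × ℤ × ℤ) :
    lowerShift ℓ m.1 * x (ℓ + 1) m ^ 2 ≤ lowerDiag (ℓ + 1) m.1 * x (ℓ + 1) m ^ 2 := by
  by_cases h : x (ℓ + 1) m = 0
  · simp [h]
  · obtain ⟨hℓ, hm₀, -⟩ := hx (ℓ + 1) m h
    exact mul_le_mul_of_nonneg_right (lowerShift_le_lowerDiag_succ (by omega) hm₀) (sq_nonneg _)

end AdmissibleSupport

theorem spectral_gap_position
    (x : ℕ → ℤ × ℤ × ℤ × ℤ → ℝ)
    (hxN : ∀ (ℓ : ℕ) (m : ℤ × ℤ × ℤ × ℤ), ¬ inN ℓ m → x ℓ m = 0)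
    (hx0 : ∀ m : ℤ × ℤ × ℤ × ℤ, x 0 m = 0)
    (hx1 : ∀ m : ℤ × ℤ × ℤ × ℤ, x 1 m = 0)
    (hsum : Summable fun p : ℕ × (ℤ × ℤ × ℤ × ℤ) =>
      ((p.1 : ℝ) + 2) ^ 2 * x p.1 p.2 ^ 2) :
    (Summable fun p : ℕ × (ℤ × ℤ × ℤ × ℤ) =>
      |αc p.1 p.2.1 * x p.1 p.2 ^ 2 + βc p.1 p.2.1 * x p.1 p.2 * x (p.1 + 1) p.2|) ∧
    (Summable fun p : ℕ × (ℤ × ℤ × ℤ × ℤ) =>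
      |((p.1 : ℝ) + 2) ^ 2 * x p.1 p.2 ^ 2
        + 2 * C₅ p.1 p.2.1 * ((p.1 : ℝ) + 2) * ((p.1 : ℝ) + 3)
          * x p.1 p.2 * x (p.1 + 1) p.2|) ∧
    (18 / 85) * ∑' p : ℕ × (ℤ × ℤ × ℤ × ℤ),
        (((p.1 : ℝ) + 2) ^ 2 * x p.1 p.2 ^ 2
          + 2 * C₅ p.1 p.2.1 * ((p.1 : ℝ) + 2) * ((p.1 : ℝ) + 3)
            * x p.1 p.2 * x (p.1 + 1) p.2)
      ≤ ∑' p : ℕ × (ℤ × ℤ × ℤ × ℤ),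
          (αc p.1 p.2.1 * x p.1 p.2 ^ 2 + βc p.1 p.2.1 * x p.1 p.2 * x (p.1 + 1) p.2) := by
  have hx := hasAdmissibleSupport_of_inN hxN hx0 hx1
  have hQ := summable_abs_tridiagonal x (fun ℓ m => αc ℓ m.1) (fun ℓ m => βc ℓ m.1) hsum
    (fun ℓ m h => abs_αc_le (hx ℓ m h).2.1 (hx ℓ m h).2.2)
    (fun ℓ m h => abs_βc_le (hx ℓ m h).2.1 (hx ℓ m h).2.2)
  have hM := summable_abs_tridiagonal x (fun ℓ _ => ((ℓ : ℝ) + 2) ^ 2)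
    (fun ℓ m => 2 * C₅ ℓ m.1 * ((ℓ : ℝ) + 2) * ((ℓ : ℝ) + 3)) hsum
    (fun ℓ _ _ => by rw [abs_sq]; linarith [sq_nonneg ((ℓ : ℝ) + 2)])
    (fun ℓ m _ => abs_two_mul_C₅_mul_le ℓ m.1)
  refine ⟨hQ, hM, ?_⟩
  have hgap := tsum_nonneg_of_sub_le_of_le_shift
    ((summable_abs_iff.1 hQ).sub ((summable_abs_iff.1 hM).mul_left (18 / 85)))
    (hx.summable_lowerDiag_mul_sq hsum) (fun p => hx.lowerDiag_mul_sq_nonneg p.1 p.2)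
    (fun p => hx.lowerDiag_sub_lowerShift_le p.1 p.2) hx.lowerShift_mul_sq_le
  rw [(summable_abs_iff.1 hQ).tsum_sub ((summable_abs_iff.1 hM).mul_left _),
    (summable_abs_iff.1 hM).tsum_mul_left] at hgap
  linarith
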